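/- (Corollary.) Fix n ≥ 1 and 1 ≤ k ≤ n, working in the polynomial ring P defined in the context. Let S ⊆ P be a good subset and let w ∈ S be such that, for some pair of distinct indices i, j ∈ {1,…,n}, every monomial of w with nonzero coefficient contains the index j exactly once (counted with multiplicity over its variables) and the index i does not appear in w. Then for every s ∈ ℂ, the element u_{ij}(s)·w lies in the ℂ-linear span of S. -/

import Mathlib

open MvPolynomial

/-- Indexing set: `k`-element subsets of `{1,…,n}`. -/
abbrev FermionIdx (n k : ℕ) := {I : Finset (Fin n) // I.card = k}

/-- The polynomial ring `P` over `ℂ` in commuting variables `X_I` indexed by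
`k`-element subsets of `{1,…,n}`, modelling `S(Λ^k ℂⁿ)`. -/
abbrev FermionPoly (n k : ℕ) := MvPolynomial (FermionIdx n k) ℂ

/-- The transvection `u_{ij}(s)` acting on `P` as a `ℂ`-algebra endomorphism:
`X_I ↦ X_I` if `j ∉ I` or `{i,j} ⊆ I`, and
`X_I ↦ X_I + (−1)^c·s·X_{(I∖{j})∪{i}}` if `j ∈ I`, `i ∉ I`, where `c` is the
number of elements of `I` strictly between `min i j` and `max i j`. -/
noncomputable def transvect (n k : ℕ) (i j : Fin n) (s : ℂ) :
    FermionPoly n k →ₐ[ℂ] FermionPoly n k :=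
  MvPolynomial.aeval (fun I : FermionIdx n k =>
    if h : j ∈ I.1 ∧ i ∉ I.1 then
      MvPolynomial.X I +
        (((-1 : ℂ) ^ ((I.1.filter (fun a => min i j < a ∧ a < max i j)).card)) * s) •
          MvPolynomial.X (⟨insert i (I.1.erase j), by
            rcases h with ⟨hj, hi⟩
            have hk : 0 < I.1.card := Finset.card_pos.mpr ⟨j, hj⟩
            rw [Finset.card_insert_of_notMem
                (fun hm => hi (Finset.mem_of_mem_erase hm)),
              Finset.card_erase_of_mem hj]
            rw [I.2] at hk ⊢
            omega⟩ : FermionIdx n k)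
    else MvPolynomial.X I)

/-- The sign `ε(π, I) ∈ {±1}` of the permutation sorting the list
`(π(i₁),…,π(i_k))`, computed as `(−1)^{#inversions}`. -/
noncomputable def signEps (n : ℕ) (π : Equiv.Perm (Fin n)) (I : Finset (Fin n)) : ℂ :=
  (-1 : ℂ) ^ ((I ×ˢ I).filter (fun p => p.1 < p.2 ∧ π p.2 < π p.1)).card

/-- The action of `π ∈ S_n` on `P` by `ℂ`-algebra automorphisms:
`π·X_I = ε(π,I)·X_{π(I)}`. -/
noncomputable def permAct (n k : ℕ) (π : Equiv.Perm (Fin n)) :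
    FermionPoly n k →ₐ[ℂ] FermionPoly n k :=
  MvPolynomial.aeval (fun I : FermionIdx n k =>
    signEps n π I.1 •
      MvPolynomial.X (⟨I.1.image π, by
        rw [Finset.card_image_of_injective _ π.injective, I.2]⟩ : FermionIdx n k))

/-- The torus action `D_t` on `P`: `D_t(X_I) = (Π_{a∈I} t_a)·X_I`. -/
noncomputable def torusAct (n k : ℕ) (t : Fin n → ℂˣ) :
    FermionPoly n k →ₐ[ℂ] FermionPoly n k :=
  MvPolynomial.aeval (fun I : FermionIdx n k =>
    (∏ a ∈ I.1, (t a : ℂ)) • MvPolynomial.X I)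

/-- `w` is a weight vector of weight `r ∈ ℤⁿ` if
`D_t(w) = (Π_a t_a^{r_a})·w` for all `t ∈ (ℂˣ)ⁿ`. -/
def IsWeightVector (n k : ℕ) (w : FermionPoly n k) (r : Fin n → ℤ) : Prop :=
  ∀ t : Fin n → ℂˣ, torusAct n k t w = (∏ a, (t a : ℂ) ^ (r a)) • w

/-- The index `i` appears in `w` if some monomial of `w` with nonzero
coefficient contains a variable `X_I` with `i ∈ I`. -/
def AppearsIn (n k : ℕ) (i : Fin n) (w : FermionPoly n k) : Prop :=
  ∃ mono ∈ w.support, ∃ I ∈ mono.support, i ∈ I.1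

/-- The number of times index `j` occurs in a monomial, counted with
multiplicity over its variables. -/
def idxMultiplicity (n k : ℕ) (j : Fin n) (mono : FermionIdx n k →₀ ℕ) : ℕ :=
  ∑ I ∈ mono.support, if j ∈ I.1 then mono I else 0

/-- `S ⊆ P` is good if `⋃_{w∈S} ℂw` is stable under the `S_n`-action and every
element of `S` is a weight vector. -/
def IsGood (n k : ℕ) (S : Set (FermionPoly n k)) : Prop :=
  (∀ π : Equiv.Perm (Fin n), ∀ w ∈ S, ∃ v ∈ S, ∃ c : ℂ, permAct n k π w = c • v) ∧
  (∀ w ∈ S, ∃ r : Fin n → ℤ, IsWeightVector n k w r)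

/-! Every monomial of `w` is `X_{I₀} · p` with `j ∈ I₀`, `i ∉ I₀`, and no variable of `p` involving
`i` or `j`. On such a monomial the transposition `(i j)` fixes `p` and sends `X_{I₀}` to
`ε · X_{(I₀∖{j})∪{i}}`, where the inversions counted by `ε` are the pairs of `j` with an element
of `I₀` between `i` and `j`; this is the sign in `u_{ij}(s)`. Hence `u_{ij}(s) = 1 + s · (i j)`
on `w`, and `(i j) · w` is a multiple of an element of `S` because `S` is good. -/

open Finset Equiv

section Swap

variable {α : Type*} [DecidableEq α] {i j : α} {I : Finset α}

theorem Finset.image_swap_eq_self (hi : i ∉ I) (hj : j ∉ I) :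
    I.image (swap i j) = I := by
  ext a
  grind

theorem Finset.image_swap_eq_insert_erase (hj : j ∈ I) (hi : i ∉ I) :
    I.image (swap i j) = insert i (I.erase j) := by
  ext a
  grind

variable [LinearOrder α]

theorem Finset.filter_swap_inversions_eq_empty (hi : i ∉ I) (hj : j ∉ I) :
    (I ×ˢ I).filter (fun p => p.1 < p.2 ∧ swap i j p.2 < swap i j p.1) = ∅ := by
  rw [filter_eq_empty_iff]
  grind

/-- An inversion of `swap i j` on `I` pairs `j` with an element of `I` lying between `i` and
`j`. -/
theorem Finset.card_filter_swap_inversions (hj : j ∈ I) (hi : i ∉ I) :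
    ((I ×ˢ I).filter (fun p => p.1 < p.2 ∧ swap i j p.2 < swap i j p.1)).card
      = (I.filter fun a => min i j < a ∧ a < max i j).card := by
  refine card_nbij' (fun p => if p.1 = j then p.2 else p.1)
    (fun a => if a < j then (a, j) else (j, a)) ?_ ?_ ?_ ?_ <;>
  · intro p hp
    grind

end Swap

namespace MvPolynomial

variable {σ R : Type*} [CommSemiring R]

theorem algHom_monomial_eq_self {φ : MvPolynomial σ R →ₐ[R] MvPolynomial σ R}
    {m : σ →₀ ℕ} (h : ∀ v ∈ m.support, φ (X v) = X v) (c : R) :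
    φ (monomial m c) = monomial m c := by
  rw [monomial_eq, map_mul, Finsupp.prod, map_prod]
  congr 1
  · exact φ.commutes c
  · exact prod_congr rfl fun v hv => by rw [map_pow, h v hv]

end MvPolynomial

open MvPolynomial

section Fermion

variable {n k : ℕ} {i j : Fin n} {I : FermionIdx n k}

theorem signEps_swap_of_notMem_of_notMem (hi : i ∉ I.1) (hj : j ∉ I.1) :
    signEps n (swap i j) I.1 = 1 := by
  rw [signEps, filter_swap_inversions_eq_empty hi hj, card_empty, pow_zero]

theorem signEps_swap_of_mem_of_notMem (hj : j ∈ I.1) (hi : i ∉ I.1) :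
    signEps n (swap i j) I.1 =
      (-1 : ℂ) ^ (I.1.filter fun a => min i j < a ∧ a < max i j).card := by
  rw [signEps, card_filter_swap_inversions hj hi]

theorem permAct_swap_X_of_notMem_of_notMem (hi : i ∉ I.1) (hj : j ∉ I.1) :
    permAct n k (swap i j) (X I) = X I := by
  rw [permAct, aeval_X, signEps_swap_of_notMem_of_notMem hi hj, one_smul]
  exact congrArg X (Subtype.ext (image_swap_eq_self hi hj))

theorem transvect_X_of_notMem (s : ℂ) (hj : j ∉ I.1) : transvect n k i j s (X I) = X I := by
  rw [transvect, aeval_X, dif_neg fun h => hj h.1]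

theorem transvect_X_of_mem_of_notMem (s : ℂ) (hj : j ∈ I.1) (hi : i ∉ I.1) :
    transvect n k i j s (X I) = X I + s • permAct n k (swap i j) (X I) := by
  rw [transvect, permAct, aeval_X, aeval_X, dif_pos ⟨hj, hi⟩,
    signEps_swap_of_mem_of_notMem hj hi, mul_comm, mul_smul]
  congr 4
  exact Subtype.ext (image_swap_eq_insert_erase hj hi).symm

theorem exists_eq_single_add_filter_of_idxMultiplicity_eq_one {m : FermionIdx n k →₀ ℕ}
    (h : idxMultiplicity n k j m = 1) :
    ∃ I₀ ∈ m.support, j ∈ I₀.1 ∧ m = Finsupp.single I₀ 1 + m.filter (fun I => j ∉ I.1) := by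
  have hsum : (m.filter fun I => j ∈ I.1).sum (fun _ e => e) = 1 := by
    rw [Finsupp.sum_filter_index, Finsupp.support_filter, sum_filter]
    exact h
  obtain ⟨I₀, hI₀⟩ := (Finsupp.sum_eq_one_iff _).mp hsum
  have hmI₀ := DFunLike.congr_fun hI₀ I₀
  rw [Finsupp.filter_apply, Finsupp.single_eq_same] at hmI₀
  have hjI₀ : j ∈ I₀.1 := by
    by_contra hjI₀
    simp [hjI₀] at hmI₀
  rw [if_pos hjI₀] at hmI₀
  exact ⟨I₀, by simp [hmI₀], hjI₀, by rw [← hI₀, Finsupp.filter_add_filter_not]⟩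

theorem transvect_monomial {m : FermionIdx n k →₀ ℕ} (s c : ℂ)
    (hj : idxMultiplicity n k j m = 1) (hi : ∀ I ∈ m.support, i ∉ I.1) :
    transvect n k i j s (monomial m c) =
      monomial m c + s • permAct n k (swap i j) (monomial m c) := by
  obtain ⟨I₀, hI₀, hjI₀, hm⟩ := exists_eq_single_add_filter_of_idxMultiplicity_eq_one hj
  have hrest : ∀ I ∈ (m.filter fun I => j ∉ I.1).support, i ∉ I.1 ∧ j ∉ I.1 := by
    intro I hI
    rw [Finsupp.support_filter, mem_filter] at hI
    exact ⟨hi I hI.1, hI.2⟩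
  rw [hm, monomial_single_add, pow_one, map_mul, map_mul,
    transvect_X_of_mem_of_notMem s hjI₀ (hi I₀ hI₀),
    algHom_monomial_eq_self fun I hI => transvect_X_of_notMem s (hrest I hI).2,
    algHom_monomial_eq_self fun I hI => permAct_swap_X_of_notMem_of_notMem (hrest I hI).1
      (hrest I hI).2, add_mul, smul_mul_assoc]

theorem transvect_eq_add_smul_permAct {w : FermionPoly n k} (s : ℂ)
    (hj : ∀ m ∈ w.support, idxMultiplicity n k j m = 1) (hi : ¬ AppearsIn n k i w) :
    transvect n k i j s w = w + s • permAct n k (swap i j) w := by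
  conv_lhs => rw [w.as_sum]
  rw [map_sum, sum_congr rfl fun m hm => transvect_monomial s _ (hj m hm)
      fun I hI hiI => hi ⟨m, hm, I, hI, hiI⟩,
    sum_add_distrib, ← smul_sum, ← map_sum, ← w.as_sum]

end Fermion

theorem stmt_8_general (n k : ℕ)
    (S : Set (FermionPoly n k)) (hS : IsGood n k S)
    (w : FermionPoly n k) (hwS : w ∈ S)
    (i j : Fin n)
    (hj : ∀ mono ∈ w.support, idxMultiplicity n k j mono = 1)
    (hi : ¬ AppearsIn n k i w) :
    ∀ s : ℂ, transvect n k i j s w ∈ Submodule.span ℂ S := by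
  intro s
  obtain ⟨v, hvS, c, hc⟩ := hS.1 (swap i j) w hwS
  rw [transvect_eq_add_smul_permAct s hj hi, hc, smul_smul]
  exact add_mem (Submodule.subset_span hwS) (Submodule.smul_mem _ _ (Submodule.subset_span hvS))

/-- Corollary: if `S` is good, `w ∈ S`, every monomial of `w`
contains the index `j` exactly once and `i` does not appear in `w`, then
`u_{ij}(s)·w` lies in the `ℂ`-linear span of `S` for every `s`. -/
theorem stmt_8 (n k : ℕ) (hn : 1 ≤ n) (hk1 : 1 ≤ k) (hkn : k ≤ n)
    (S : Set (FermionPoly n k)) (hS : IsGood n k S)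
    (w : FermionPoly n k) (hwS : w ∈ S)
    (i j : Fin n) (hij : i ≠ j)
    (hj : ∀ mono ∈ w.support, idxMultiplicity n k j mono = 1)
    (hi : ¬ AppearsIn n k i w) :
    ∀ s : ℂ, transvect n k i j s w ∈ Submodule.span ℂ S :=
  stmt_8_general n k S hS w hwS i j hj hi
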